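/- arXiv:2601.18178 — 2 statements merged into one kernel-verified Lean document; each statement's English description precedes it below -/
import Mathlib

section
/- Assume that the joint distribution function F of the i.i.d. sample is continuous on [0,∞)^d. Let m(n) = (m_1(n),…,m_d(n)) be smoothing vectors with m_min(n) = min_j m_j(n) → ∞ as n → ∞. Then for every L > 0, sup_{x ∈ [0,L]^d} |F_{m(n),n}(x) − F(x)| → 0 almost surely as n → ∞; consequently, F_{m(n),n} converges to F almost surely, uniformly on compact subsets of [0,∞)^d. -/
open MeasureTheory ProbabilityTheory Filter Real

/-- Partial derivative `∂_{x_j} F(x)`. -/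
noncomputable def pd {d : ℕ} (F : (Fin d → ℝ) → ℝ) (j : Fin d) (x : Fin d → ℝ) : ℝ :=
  deriv (fun t => F (Function.update x j t)) (x j)

/-- Second partial derivative `∂²_{x_i x_j} F(x)`. -/
noncomputable def pd2 {d : ℕ} (F : (Fin d → ℝ) → ℝ) (i j : Fin d) (x : Fin d → ℝ) : ℝ :=
  pd (pd F j) i x

/-- Product-Poisson weights `P_{k,m}(x) = ∏_j e^{-m_j x_j} (m_j x_j)^{k_j} / k_j!`. -/
noncomputable def poissonWeight {d : ℕ} (m : Fin d → ℕ) (k : Fin d → ℕ) (x : Fin d → ℝ) : ℝ :=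
  ∏ j, Real.exp (-(m j * x j)) * (m j * x j) ^ (k j) / Nat.factorial (k j)

/-- Szász–Mirakyan smoothing `F_m(x) = Σ_k F(k/m) P_{k,m}(x)`. -/
noncomputable def szasz {d : ℕ} (F : (Fin d → ℝ) → ℝ) (m : Fin d → ℕ) (x : Fin d → ℝ) : ℝ :=
  ∑' k : Fin d → ℕ, F (fun j => (k j : ℝ) / (m j : ℝ)) * poissonWeight m k x

/-- The open positive orthant `(0,∞)^d`. -/
def posOrthant (d : ℕ) : Set (Fin d → ℝ) := {x | ∀ j, 0 < x j}

/-- ℓ¹-neighbourhood of `S` inside the positive orthant. -/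
def l1Nbhd {d : ℕ} (S : Set (Fin d → ℝ)) (δ : ℝ) : Set (Fin d → ℝ) :=
  {y | (∀ j, 0 < y j) ∧ ∃ z ∈ S, ∑ j, |y j - z j| ≤ δ}

/-- Assumption (A1): `F` is C² on `(0,∞)^d`, with first and second partial derivatives
bounded on an ℓ¹-neighbourhood of each compact `S ⊂ (0,∞)^d`. -/
def A1 {d : ℕ} (F : (Fin d → ℝ) → ℝ) : Prop :=
  ContDiffOn ℝ 2 F (posOrthant d) ∧
  ∀ S : Set (Fin d → ℝ), IsCompact S → S ⊆ posOrthant d →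
    ∃ δ > 0, ∃ M : ℝ, ∀ y ∈ l1Nbhd S δ,
      (∀ i, |pd F i y| ≤ M) ∧ (∀ i j, |pd2 F i j y| ≤ M)

/-- `m_min = min_j m_j`. -/
noncomputable def mmin {d : ℕ} (m : Fin d → ℕ) : ℕ := ⨅ j, m j

/-- Empirical distribution function `F_n(x) = n⁻¹ Σ_{i<n} 1{X_i ≤ x}`. -/
noncomputable def ecdf {d : ℕ} {Ω : Type*} (n : ℕ) (X : ℕ → Ω → Fin d → ℝ)
    (ω : Ω) (x : Fin d → ℝ) : ℝ :=
  (n : ℝ)⁻¹ * ∑ i ∈ Finset.range n, if ∀ j, X i ω j ≤ x j then (1 : ℝ) else 0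

/-- Szász–Mirakyan estimator `F_{m,n}(x)`. -/
noncomputable def szaszEst {d : ℕ} {Ω : Type*} (m : Fin d → ℕ) (n : ℕ)
    (X : ℕ → Ω → Fin d → ℝ) (ω : Ω) (x : Fin d → ℝ) : ℝ :=
  szasz (ecdf n X ω) m x

/-- `X_0, X_1, …` are i.i.d. random vectors in `[0,∞)^d` with joint c.d.f. `F`. -/
def IsIIDwithCDF {d : ℕ} {Ω : Type*} [MeasurableSpace Ω] (μ : Measure Ω)
    (X : ℕ → Ω → Fin d → ℝ) (F : (Fin d → ℝ) → ℝ) : Prop :=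
  (∀ i, Measurable (X i)) ∧
  iIndepFun X μ ∧
  (∀ i, IdentDistrib (X i) (X 0) μ μ) ∧
  (∀ i ω j, 0 ≤ X i ω j) ∧
  (∀ x, F x = (μ {ω | ∀ j, X 0 ω j ≤ x j}).toReal)

/-!
The estimator is the Szász–Mirakyan operator `S_m` applied to the empirical c.d.f. `F_n`. Its
weights form a product of Poisson laws, so `S_m` is a positive averaging operator and
`|S_m F_n - F| ≤ sup_{y ≥ 0} |F_n y - F y| + |S_m F - F|`.

The first term tends to `0` almost surely (multivariate Glivenko–Cantelli): the strong law gives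
convergence at countably many points, and Pólya's bracketing argument, using monotonicity and
continuity of `F` and the smallness of its tail mass, makes it uniform on `[0, ∞)^d`.

The second term tends to `0` uniformly on `[0, L]^d` by Korovkin's argument: `F` is uniformly
continuous near `[0, L]^d` and bounded, while the Poisson variances give
`∑_k ‖k / m - x‖² P_{k,m}(x) = ∑_j x_j / m_j ≤ d L / m_min`.
-/

open Set Topology

noncomputable def poissonTerm (t : ℝ) (a : ℕ) : ℝ := exp (-t) * t ^ a / a.factorial

section Poisson

variable {t : ℝ}

lemma poissonTerm_nonneg (ht : 0 ≤ t) (a : ℕ) : 0 ≤ poissonTerm t a := by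
  unfold poissonTerm; positivity

lemma hasSum_poissonTerm (ht : 0 ≤ t) : HasSum (poissonTerm t) 1 :=
  hasSum_one_poissonMeasure ⟨t, ht⟩

lemma hasSum_descFactorial_mul_poissonTerm (ht : 0 ≤ t) (r : ℕ) :
    HasSum (fun a => (a.descFactorial r : ℝ) * poissonTerm t a) (t ^ r) := by
  refine (hasSum_nat_add_iff' r).mp ?_
  have hlow : ∑ a ∈ Finset.range r, (a.descFactorial r : ℝ) * poissonTerm t a = 0 :=
    Finset.sum_eq_zero fun a ha => by
      rw [Nat.descFactorial_eq_zero_iff_lt.mpr (Finset.mem_range.mp ha), Nat.cast_zero, zero_mul]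
  have hshift : ∀ n, ((n + r).descFactorial r : ℝ) * poissonTerm t (n + r) =
      t ^ r * poissonTerm t n := by
    intro n
    have h := Nat.factorial_mul_descFactorial (Nat.le_add_left r n)
    rw [Nat.add_sub_cancel] at h
    have hcast : ((n + r).factorial : ℝ) = n.factorial * (n + r).descFactorial r := by
      exact_mod_cast h.symm
    simp only [poissonTerm, hcast, pow_add]
    field_simp
  simpa [hlow, hshift] using (hasSum_poissonTerm ht).mul_left (t ^ r)

lemma hasSum_sq_sub_mul_poissonTerm (ht : 0 ≤ t) :
    HasSum (fun a : ℕ => ((a : ℝ) - t) ^ 2 * poissonTerm t a) t := by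
  have h := (hasSum_descFactorial_mul_poissonTerm ht 2).add
    (((hasSum_descFactorial_mul_poissonTerm ht 1).mul_left (1 - 2 * t)).add
      ((hasSum_poissonTerm ht).mul_left (t ^ 2)))
  rw [show t ^ 2 + ((1 - 2 * t) * t ^ 1 + t ^ 2 * 1) = t by ring] at h
  refine h.congr_fun fun a => ?_
  rw [Nat.cast_descFactorial_two, Nat.descFactorial_one]
  ring

lemma hasSum_sq_div_sub_mul_poissonTerm {x : ℝ} (hx : 0 ≤ x) {m : ℕ} (hm : m ≠ 0) :
    HasSum (fun a : ℕ => ((a : ℝ) / m - x) ^ 2 * poissonTerm (m * x) a) (x / m) := by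
  have hm' : (m : ℝ) ≠ 0 := Nat.cast_ne_zero.mpr hm
  have h := (hasSum_sq_sub_mul_poissonTerm (by positivity : 0 ≤ (m : ℝ) * x)).mul_left
    ((m : ℝ) ^ 2)⁻¹
  rw [show ((m : ℝ) ^ 2)⁻¹ * (m * x) = x / m by field_simp] at h
  refine h.congr_fun fun a => ?_
  field_simp

end Poisson

lemma hasSum_prod_apply_of_nonneg {β : Type*} {d : ℕ} (f : Fin d → β → ℝ) (S : Fin d → ℝ)
    (h0 : ∀ j b, 0 ≤ f j b) (hS : ∀ j, HasSum (f j) (S j)) :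
    HasSum (fun k : Fin d → β => ∏ j, f j (k j)) (∏ j, S j) := by
  induction d with
  | zero => simp
  | succ d ih =>
    have hhead : HasSum (f 0) (S 0) := hS 0
    have htail : HasSum (fun k : Fin d → β => ∏ j : Fin d, f j.succ (k j))
        (∏ j : Fin d, S j.succ) :=
      ih _ _ (fun j => h0 j.succ) (fun j => hS j.succ)
    have hsummable := hhead.summable.mul_of_nonneg htail.summable (h0 0)
        fun k => Finset.prod_nonneg fun j _ => h0 j.succ (k j)
    rw [← (Fin.consEquiv fun _ => β).hasSum_iff, Fin.prod_univ_succ]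
    refine (hhead.mul htail hsummable).congr_fun fun p => ?_
    simp only [Function.comp_apply, Fin.consEquiv_apply, Fin.prod_univ_succ, Fin.cons_zero,
      Fin.cons_succ]

section Szasz

variable {d : ℕ} {m : Fin d → ℕ} {x : Fin d → ℝ}

lemma poissonWeight_eq_prod (k : Fin d → ℕ) :
    poissonWeight m k x = ∏ j, poissonTerm (m j * x j) (k j) := rfl

lemma poissonWeight_nonneg (hx : 0 ≤ x) (k : Fin d → ℕ) : 0 ≤ poissonWeight m k x :=
  Finset.prod_nonneg fun j _ => poissonTerm_nonneg (mul_nonneg (Nat.cast_nonneg _) (hx j)) _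

lemma hasSum_poissonWeight (hx : 0 ≤ x) : HasSum (fun k => poissonWeight m k x) 1 := by
  simpa [poissonWeight_eq_prod] using hasSum_prod_apply_of_nonneg _ (fun _ => 1)
    (fun j => poissonTerm_nonneg (mul_nonneg (Nat.cast_nonneg _) (hx j)))
    (fun j => hasSum_poissonTerm (mul_nonneg (Nat.cast_nonneg _) (hx j)))

/-- The `j`-th marginal of the weights is Poisson with mean `m j * x j`; this is its variance,
rescaled. -/
lemma hasSum_sq_sub_mul_poissonWeight (hx : 0 ≤ x) (j : Fin d) (hm : m j ≠ 0) :
    HasSum (fun k => ((k j : ℝ) / m j - x j) ^ 2 * poissonWeight m k x) (x j / m j) := by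
  classical
  have hx' : ∀ i, 0 ≤ (m i : ℝ) * x i := fun i => mul_nonneg (Nat.cast_nonneg _) (hx i)
  set f : Fin d → ℕ → ℝ := Function.update (fun i => poissonTerm (m i * x i)) j
    fun a => ((a : ℝ) / m j - x j) ^ 2 * poissonTerm (m j * x j) a
  have h0 : ∀ i a, 0 ≤ f i a := by
    intro i a
    rcases eq_or_ne i j with rfl | hi
    · simpa [f] using mul_nonneg (sq_nonneg _) (poissonTerm_nonneg (hx' i) a)
    · simpa [f, hi] using poissonTerm_nonneg (hx' i) a
  have hS : ∀ i, HasSum (f i) (Function.update (fun _ => (1 : ℝ)) j (x j / m j) i) := by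
    intro i
    rcases eq_or_ne i j with rfl | hi
    · simpa [f] using hasSum_sq_div_sub_mul_poissonTerm (hx i) hm
    · simpa [f, hi] using hasSum_poissonTerm (hx' i)
  convert hasSum_prod_apply_of_nonneg f _ h0 hS using 1
  · funext k
    rw [poissonWeight_eq_prod, ← Finset.mul_prod_erase _ _ (Finset.mem_univ j),
      ← Finset.mul_prod_erase _ (fun i => f i (k i)) (Finset.mem_univ j)]
    simp only [f, Function.update_self, mul_assoc]
    congr 2
    exact Finset.prod_congr rfl fun i hi => by
      rw [Function.update_of_ne (Finset.ne_of_mem_erase hi)]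
  · rw [Finset.prod_update_of_mem (Finset.mem_univ j)]
    simp

lemma hasSum_add_mul_sum_sq_mul_poissonWeight (hx : 0 ≤ x) (hm : ∀ j, m j ≠ 0) (a b : ℝ) :
    HasSum (fun k => (a + b * ∑ j, ((k j : ℝ) / m j - x j) ^ 2) * poissonWeight m k x)
      (a + b * ∑ j, x j / m j) := by
  have h := ((hasSum_poissonWeight (m := m) hx).mul_left a).add
    ((hasSum_sum (s := Finset.univ) fun j _ =>
      hasSum_sq_sub_mul_poissonWeight hx j (hm j)).mul_left b)
  rw [mul_one] at h
  refine h.congr_fun fun k => ?_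
  rw [← Finset.sum_mul]
  ring

lemma abs_szasz_sub_le (hx : 0 ≤ x) {G : (Fin d → ℝ) → ℝ} {c : ℝ} {g : (Fin d → ℕ) → ℝ}
    (hg : Summable fun k => g k * poissonWeight m k x)
    (hG : ∀ k, |G (fun j => (k j : ℝ) / m j) - c| ≤ g k) :
    |szasz G m x - c| ≤ ∑' k, g k * poissonWeight m k x := by
  have hP := hasSum_poissonWeight (m := m) hx
  have hdom : ∀ k, ‖(G (fun j => (k j : ℝ) / m j) - c) * poissonWeight m k x‖ ≤
      g k * poissonWeight m k x := fun k => by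
    rw [norm_mul, Real.norm_eq_abs, Real.norm_of_nonneg (poissonWeight_nonneg hx k)]
    exact mul_le_mul_of_nonneg_right (hG k) (poissonWeight_nonneg hx k)
  have hsum := (hg.of_norm_bounded hdom).hasSum.add (hP.mul_left c)
  rw [mul_one] at hsum
  have hszasz : szasz G m x =
      ∑' k, (G (fun j => (k j : ℝ) / m j) - c) * poissonWeight m k x + c := by
    rw [szasz, ← hsum.tsum_eq]
    congr 1
    funext k
    ring
  rw [hszasz, add_sub_cancel_right, ← Real.norm_eq_abs]
  exact tsum_of_norm_bounded hg.hasSum hdom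

end Szasz

/-- Korovkin-type estimate: `F` is uniformly continuous on the compact `[0, L + 1]^ι`, and
far from `x` the quadratic term dominates `2B`. -/
lemma exists_abs_sub_le_add_mul_sum_sq {ι : Type*} [Fintype ι] {F : (ι → ℝ) → ℝ} {B ε : ℝ}
    (hF : ContinuousOn F (Ici 0)) (hB : ∀ y ∈ Ici 0, |F y| ≤ B) (hε : 0 < ε) (L : ℝ) :
    ∃ C ≥ 0, ∀ x ∈ Icc 0 (fun _ => L), ∀ y ∈ Ici 0,
      |F y - F x| ≤ ε + C * ∑ j, (y j - x j) ^ 2 := by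
  obtain ⟨δ, hδ, hUC⟩ := Metric.uniformContinuousOn_iff.mp
    ((isCompact_Icc (a := 0) (b := fun _ : ι => L + 1)).uniformContinuousOn_of_continuous
      (hF.mono Icc_subset_Ici_self)) ε hε
  set r := min δ 1
  have hr : 0 < r := lt_min hδ one_pos
  have hB0 : 0 ≤ B := (abs_nonneg _).trans (hB 0 (mem_Ici.mpr le_rfl))
  refine ⟨2 * B / r ^ 2, by positivity, fun x hx y hy => ?_⟩
  have hsq : 0 ≤ 2 * B / r ^ 2 * ∑ j, (y j - x j) ^ 2 := by positivity
  by_cases hclose : ∀ j, |y j - x j| < r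
  · have hyL : y ∈ Icc 0 (fun _ => L + 1) := ⟨hy, fun j => by
      linarith [(abs_lt.mp (hclose j)).2, hx.2 j, min_le_right δ 1]⟩
    have hxL : x ∈ Icc 0 (fun _ => L + 1) := ⟨hx.1, fun j => by linarith [hx.2 j]⟩
    have hdist : dist y x < δ := (dist_pi_lt_iff hδ).mpr fun j =>
      (Real.dist_eq _ _ ▸ hclose j).trans_le (min_le_left _ _)
    have := hUC y hyL x hxL hdist
    rw [Real.dist_eq] at this
    linarith
  · push Not at hclose
    obtain ⟨j, hj⟩ := hclose
    have hfar : r ^ 2 ≤ ∑ i, (y i - x i) ^ 2 :=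
      (sq_abs (y j - x j) ▸ pow_le_pow_left₀ hr.le hj 2).trans
        (Finset.single_le_sum (fun i _ => sq_nonneg (y i - x i)) (Finset.mem_univ j))
    have h2B : 2 * B ≤ 2 * B / r ^ 2 * ∑ i, (y i - x i) ^ 2 := by
      rw [div_mul_eq_mul_div, le_div_iff₀ (by positivity)]
      exact mul_le_mul_of_nonneg_left hfar (by positivity)
    linarith [abs_sub (F y) (F x), hB y hy, hB x hx.1]

lemma abs_szasz_sub_le_add {d : ℕ} {m : Fin d → ℕ} {x : Fin d → ℝ} (hx : 0 ≤ x)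
    (hm : ∀ j, m j ≠ 0) {G F : (Fin d → ℝ) → ℝ} {η ε C : ℝ}
    (hGF : ∀ y ∈ Ici 0, |G y - F y| ≤ η)
    (hF : ∀ y ∈ Ici 0, |F y - F x| ≤ ε + C * ∑ j, (y j - x j) ^ 2) :
    |szasz G m x - F x| ≤ η + ε + C * ∑ j, x j / m j := by
  have hsum := hasSum_add_mul_sum_sq_mul_poissonWeight hx hm (η + ε) C
  rw [← hsum.tsum_eq]
  refine abs_szasz_sub_le hx hsum.summable fun k => ?_
  have hk : (fun j => (k j : ℝ) / m j) ∈ Ici 0 := fun j => by positivity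
  calc _ ≤ |G _ - F _| + |F _ - F x| := abs_sub_le _ _ _
    _ ≤ η + (ε + C * _) := add_le_add (hGF _ hk) (hF _ hk)
    _ = _ := by ring

lemma tendsto_apply_atTop_of_tendsto_mmin {α : Type*} {l : Filter α} {d : ℕ}
    {m : α → Fin d → ℕ} (hm : Tendsto (fun i => mmin (m i)) l atTop) (j : Fin d) :
    Tendsto (fun i => m i j) l atTop :=
  tendsto_atTop_mono (fun _ => ciInf_le (OrderBot.bddBelow _) j) hm

lemma tendstoUniformlyOn_szasz {α : Type*} {l : Filter α} {d : ℕ} {F : (Fin d → ℝ) → ℝ}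
    {G : α → (Fin d → ℝ) → ℝ} {m : α → Fin d → ℕ} {B : ℝ} (hF : ContinuousOn F (Ici 0))
    (hB : ∀ y ∈ Ici 0, |F y| ≤ B) (hG : TendstoUniformlyOn G F l (Ici 0))
    (hm : Tendsto (fun i => mmin (m i)) l atTop) (L : ℝ) :
    TendstoUniformlyOn (fun i => szasz (G i) (m i)) F l (Icc 0 fun _ => L) := by
  rw [Metric.tendstoUniformlyOn_iff] at hG ⊢
  intro ε hε
  obtain ⟨C, hC0, hC⟩ := exists_abs_sub_le_add_mul_sum_sq hF hB (by positivity : 0 < ε / 4) L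
  have hmj := tendsto_apply_atTop_of_tendsto_mmin hm
  have hsmall : Tendsto (fun i => C * ∑ j, L / (m i j : ℝ)) l (𝓝 0) := by
    simpa using (tendsto_finsetSum Finset.univ fun j _ =>
      tendsto_const_nhds.div_atTop (tendsto_natCast_atTop_atTop.comp (hmj j))).const_mul C
  filter_upwards [hG (ε / 4) (by positivity),
    hsmall.eventually (gt_mem_nhds (by positivity : (0 : ℝ) < ε / 4)),
    eventually_all.mpr fun j => (hmj j).eventually_ne_atTop 0] with i hGi hCi hmi x hx
  have hGF : ∀ y ∈ Ici 0, |G i y - F y| ≤ ε / 4 := fun y hy => by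
    rw [abs_sub_comm, ← Real.dist_eq]; exact (hGi y hy).le
  have hxm : ∑ j, x j / m i j ≤ ∑ j, L / m i j :=
    Finset.sum_le_sum fun j _ => div_le_div_of_nonneg_right (hx.2 j) (Nat.cast_nonneg _)
  rw [dist_comm, Real.dist_eq]
  linarith [abs_szasz_sub_le_add hx.1 hmi hGF (hC x hx), mul_le_mul_of_nonneg_left hxm hC0]

lemma tendsto_sSup_image_abs_sub {α β : Type*} {l : Filter α} {f : α → β → ℝ} {g : β → ℝ}
    {s : Set β} (hs : s.Nonempty) (h : TendstoUniformlyOn f g l s) :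
    Tendsto (fun i => sSup ((fun x => |f i x - g x|) '' s)) l (𝓝 0) := by
  rw [Metric.tendsto_nhds]
  intro ε hε
  filter_upwards [Metric.tendstoUniformlyOn_iff.mp h (ε / 2) (half_pos hε)] with i hi
  have hle : ∀ v ∈ (fun x => |f i x - g x|) '' s, v ≤ ε / 2 := by
    rintro _ ⟨x, hx, rfl⟩
    change |f i x - g x| ≤ ε / 2
    rw [← Real.dist_eq, dist_comm]
    exact (hi x hx).le
  have hnonneg : 0 ≤ sSup ((fun x => |f i x - g x|) '' s) :=
    (abs_nonneg _).trans (le_csSup ⟨ε / 2, hle⟩ (mem_image_of_mem _ hs.some_mem))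
  rw [Real.dist_eq, sub_zero, abs_of_nonneg hnonneg]
  linarith [csSup_le (hs.image _) hle]

section Cdf

lemma measureReal_Iic_le_inf_add {α : Type*} [MeasurableSpace α] [SemilatticeInf α]
    (ν : Measure α) [IsProbabilityMeasure ν] (y : α) {c : α} (hc : MeasurableSet (Iic c)) :
    ν.real (Iic y) ≤ ν.real (Iic (y ⊓ c)) + (1 - ν.real (Iic c)) := by
  rw [← probReal_compl_eq_one_sub hc]
  refine (measureReal_mono fun z hz => ?_).trans (measureReal_union_le _ _)
  by_cases hzc : z ≤ c
  · exact Or.inl (le_inf hz hzc)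
  · exact Or.inr hzc

lemma monotone_measureReal_Iic {α : Type*} [MeasurableSpace α] [Preorder α] (ν : Measure α)
    [IsFiniteMeasure ν] : Monotone fun y => ν.real (Iic y) :=
  fun _ _ h => measureReal_mono (Iic_subset_Iic.mpr h)

lemma abs_sub_le_add_of_le_of_le {α : Type*} [Preorder α] {E F : α → ℝ} (hE : Monotone E)
    (hF : Monotone F) {a y b : α} (hay : a ≤ y) (hyb : y ≤ b) {Δ ε : ℝ}
    (ha : |E a - F a| ≤ Δ) (hb : |E b - F b| ≤ Δ) (hab : F b - F a ≤ ε) :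
    |E y - F y| ≤ Δ + ε := by
  rw [abs_le] at *
  constructor <;> linarith [hE hay, hE hyb, hF hay, hF hyb]

variable {ι : Type*} [Fintype ι]

lemma abs_measureReal_Iic_sub_le (ν ν' : Measure (ι → ℝ)) [IsProbabilityMeasure ν]
    [IsProbabilityMeasure ν'] (y c : ι → ℝ) :
    |ν.real (Iic y) - ν'.real (Iic y)| ≤ |ν.real (Iic (y ⊓ c)) - ν'.real (Iic (y ⊓ c))| +
      |ν.real (Iic c) - ν'.real (Iic c)| + (1 - ν'.real (Iic c)) := by
  have h := measureReal_Iic_le_inf_add ν y (c := c) measurableSet_Iic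
  have h' := measureReal_Iic_le_inf_add ν' y (c := c) measurableSet_Iic
  have hm := monotone_measureReal_Iic ν (inf_le_left : y ⊓ c ≤ y)
  have hm' := monotone_measureReal_Iic ν' (inf_le_left : y ⊓ c ≤ y)
  rw [abs_le]
  constructor <;> linarith [le_abs_self (ν.real (Iic (y ⊓ c)) - ν'.real (Iic (y ⊓ c))),
    neg_abs_le (ν.real (Iic (y ⊓ c)) - ν'.real (Iic (y ⊓ c))),
    le_abs_self (ν.real (Iic c) - ν'.real (Iic c)), neg_abs_le (ν.real (Iic c) - ν'.real (Iic c))]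

lemma exists_one_sub_le_measureReal_Iic (ν : Measure (ι → ℝ)) [IsProbabilityMeasure ν]
    {ε : ℝ} (hε : 0 < ε) : ∃ T ≥ 0, 1 - ε ≤ ν.real (Iic fun _ => T) := by
  have hmono : Monotone fun N : ℕ => Iic fun _ : ι => (N : ℝ) :=
    fun _ _ h => Iic_subset_Iic.mpr fun _ => Nat.cast_le.mpr h
  have hunion : ⋃ N : ℕ, Iic (fun _ : ι => (N : ℝ)) = univ := eq_univ_of_forall fun y => by
    obtain ⟨M, hM⟩ := Finite.exists_le y
    obtain ⟨N, hN⟩ := exists_nat_ge M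
    exact mem_iUnion.mpr ⟨N, fun j => (hM j).trans hN⟩
  have h := tendsto_measure_iUnion_atTop (μ := ν) hmono
  rw [hunion, measure_univ] at h
  obtain ⟨N, hN⟩ := (((ENNReal.tendsto_toReal ENNReal.one_ne_top).comp h).eventually
    (lt_mem_nhds (sub_lt_self 1 hε))).exists
  exact ⟨N, N.cast_nonneg, hN.le⟩

lemma exists_finset_bracket (ι : Type*) [Fintype ι] {h T : ℝ} (hh : 0 < h) (hT : 0 ≤ T) :
    ∃ s : Finset (ι → ℝ), (s : Set (ι → ℝ)) ⊆ Icc 0 (fun _ => T) ∧ (fun _ => T) ∈ s ∧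
      ∀ y ∈ Icc 0 (fun _ => T), ∃ a ∈ s, ∃ b ∈ s, a ≤ y ∧ y ≤ b ∧ dist a b ≤ h := by
  classical
  set N := ⌊T / h⌋₊ + 1
  set g : (ι → ℕ) → ι → ℝ := fun c j => min (c j * h) T
  have hgrid : ∀ c : ι → ℕ, (∀ j, c j ≤ N) →
      g c ∈ (Fintype.piFinset fun _ => Finset.range (N + 1)).image g := fun c hc =>
    Finset.mem_image_of_mem g (Fintype.mem_piFinset.mpr fun j => Finset.mem_range.mpr
      (Nat.lt_succ_of_le (hc j)))
  refine ⟨(Fintype.piFinset fun _ => Finset.range (N + 1)).image g, ?_, ?_, ?_⟩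
  · intro p hp
    obtain ⟨c, -, rfl⟩ := Finset.mem_image.mp hp
    exact ⟨fun j => le_min (by positivity) hT, fun j => min_le_right _ _⟩
  · convert hgrid (fun _ => N) fun _ => le_rfl using 1
    funext j
    refine (min_eq_right ?_).symm
    rw [← div_le_iff₀ hh]
    exact_mod_cast (Nat.lt_floor_add_one (T / h)).le
  · intro y hy
    set c : ι → ℕ := fun j => ⌊y j / h⌋₊
    have hcN : ∀ j, c j ≤ ⌊T / h⌋₊ := fun j =>
      Nat.floor_le_floor (div_le_div_of_nonneg_right (hy.2 j) hh.le)
    refine ⟨g c, hgrid c fun j => (hcN j).trans (Nat.le_succ _), g (c + 1),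
      hgrid (c + 1) fun j => Nat.succ_le_succ (hcN j), fun j => ?_, fun j => ?_, ?_⟩
    · exact (min_le_left _ _).trans ((le_div_iff₀ hh).mp (Nat.floor_le (by
        exact div_nonneg (hy.1 j) hh.le)))
    · refine le_min ?_ (hy.2 j)
      rw [Pi.add_apply, Pi.one_apply, Nat.cast_add_one, ← div_le_iff₀ hh]
      exact (Nat.lt_floor_add_one _).le
    · refine (dist_pi_le_iff hh.le).mpr fun j => ?_
      rw [Real.dist_eq]
      refine (abs_min_sub_min_le_max _ _ _ _).trans ?_
      simp [add_mul, abs_of_pos hh, hh.le]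

/-- Pólya's bracketing argument: on `[0, T]^ι` the continuous c.d.f. of `ν'` is squeezed
between its values on a finite grid, and beyond `T` only the tail mass `1 - ν'(Iic T)` is
lost. -/
lemma exists_finset_abs_measureReal_Iic_sub_le (ν' : Measure (ι → ℝ)) [IsProbabilityMeasure ν']
    (hcont : ContinuousOn (fun y => ν'.real (Iic y)) (Ici 0)) {ε : ℝ} (hε : 0 < ε) :
    ∃ s : Finset (ι → ℝ), ∀ (ν : Measure (ι → ℝ)) [IsProbabilityMeasure ν] (Δ : ℝ),
      (∀ p ∈ s, |ν.real (Iic p) - ν'.real (Iic p)| ≤ Δ) →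
      ∀ y ∈ Ici 0, |ν.real (Iic y) - ν'.real (Iic y)| ≤ 2 * Δ + 2 * ε := by
  obtain ⟨T, hT0, hT⟩ := exists_one_sub_le_measureReal_Iic ν' hε
  obtain ⟨δ, hδ, hUC⟩ := Metric.uniformContinuousOn_iff.mp
    ((isCompact_Icc (a := 0) (b := fun _ : ι => T)).uniformContinuousOn_of_continuous
      (hcont.mono Icc_subset_Ici_self)) ε hε
  obtain ⟨s, hsK, hTs, hbracket⟩ := exists_finset_bracket ι (half_pos hδ) hT0
  refine ⟨s, fun ν _ Δ hΔ y hy => ?_⟩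
  obtain ⟨a, ha, b, hb, hay, hyb, hab⟩ :=
    hbracket (y ⊓ fun _ => T) ⟨le_inf hy fun _ => hT0, inf_le_right⟩
  have hFab : ν'.real (Iic b) - ν'.real (Iic a) ≤ ε := by
    refine (le_abs_self _).trans ?_
    rw [← Real.dist_eq]
    exact (hUC b (hsK hb) a (hsK ha) (by rw [dist_comm]; linarith)).le
  have hmid := abs_sub_le_add_of_le_of_le (monotone_measureReal_Iic ν) (monotone_measureReal_Iic ν')
    hay hyb (hΔ a ha) (hΔ b hb) hFab
  linarith [abs_measureReal_Iic_sub_le ν ν' y fun _ => T, hΔ _ hTs]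

theorem exists_countable_tendstoUniformlyOn_measureReal_Iic (ν' : Measure (ι → ℝ))
    [IsProbabilityMeasure ν'] (hcont : ContinuousOn (fun y => ν'.real (Iic y)) (Ici 0)) :
    ∃ D : Set (ι → ℝ), D.Countable ∧ ∀ {κ : Type*} {l : Filter κ} (ν : κ → Measure (ι → ℝ)),
      (∀ᶠ i in l, IsProbabilityMeasure (ν i)) →
      (∀ p ∈ D, Tendsto (fun i => (ν i).real (Iic p)) l (𝓝 (ν'.real (Iic p)))) →
      TendstoUniformlyOn (fun i y => (ν i).real (Iic y)) (fun y => ν'.real (Iic y)) l (Ici 0) := by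
  choose s hs using fun r : ℕ =>
    exists_finset_abs_measureReal_Iic_sub_le ν' hcont (Nat.one_div_pos_of_nat (n := r))
  refine ⟨⋃ r, ↑(s r), countable_iUnion fun r => (s r).countable_toSet,
    @fun κ l ν hprob hconv => Metric.tendstoUniformlyOn_iff.mpr fun ε hε => ?_⟩
  obtain ⟨r, hr⟩ := exists_nat_one_div_lt (by positivity : 0 < ε / 4)
  have hnear : ∀ᶠ i in l, ∀ p ∈ s r, |(ν i).real (Iic p) - ν'.real (Iic p)| ≤ ε / 8 :=
    (eventually_all_finset _).mpr fun p hp =>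
      (Metric.tendsto_nhds.mp (hconv p (mem_iUnion_of_mem r hp)) (ε / 8) (by positivity)).mono
        fun i hi => (Real.dist_eq _ _ ▸ hi).le
  filter_upwards [hprob, hnear] with i _ hi y hy
  rw [dist_comm, Real.dist_eq]
  linarith [hs r (ν i) (ε / 8) hi y hy]

end Cdf

section Empirical

variable {α : Type*} [MeasurableSpace α]

noncomputable def empiricalMeasure (x : ℕ → α) (n : ℕ) : Measure α :=
  (n : ENNReal)⁻¹ • ∑ i ∈ Finset.range n, Measure.dirac (x i)

lemma isProbabilityMeasure_empiricalMeasure (x : ℕ → α) {n : ℕ} (hn : n ≠ 0) :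
    IsProbabilityMeasure (empiricalMeasure x n) :=
  ⟨by simp [empiricalMeasure, ENNReal.inv_mul_cancel (Nat.cast_ne_zero.mpr hn)]⟩

lemma ecdf_eq_measureReal_empiricalMeasure {d : ℕ} {Ω : Type*} (n : ℕ)
    (X : ℕ → Ω → Fin d → ℝ) (ω : Ω) (y : Fin d → ℝ) :
    ecdf n X ω y = (empiricalMeasure (fun i => X i ω) n).real (Iic y) := by
  classical
  simp [ecdf, empiricalMeasure, Measure.real, Measure.dirac_apply' _ measurableSet_Iic,
    indicator_apply, Pi.le_def]

end Empirical

namespace IsIIDwithCDF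

variable {d : ℕ} {Ω : Type*} [MeasurableSpace Ω] {μ : Measure Ω} {X : ℕ → Ω → Fin d → ℝ}
  {F : (Fin d → ℝ) → ℝ}

lemma eq_measureReal_map_Iic (hX : IsIIDwithCDF μ X F) :
    F = fun y => (μ.map (X 0)).real (Iic y) :=
  funext fun y => by rw [hX.2.2.2.2 y, map_measureReal_apply (hX.1 0) measurableSet_Iic]; rfl

lemma ae_tendsto_ecdf [IsProbabilityMeasure μ] (hX : IsIIDwithCDF μ X F) (p : Fin d → ℝ) :
    ∀ᵐ ω ∂μ, Tendsto (fun n => ecdf n X ω p) atTop (𝓝 (F p)) := by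
  have hφ : Measurable ((Iic p).indicator (1 : (Fin d → ℝ) → ℝ)) :=
    measurable_one.indicator measurableSet_Iic
  set Y : ℕ → Ω → ℝ := fun i => (Iic p).indicator 1 ∘ X i
  have hY0 : Y 0 = (X 0 ⁻¹' Iic p).indicator 1 := funext fun ω => (indicator_comp_right _).symm
  have hint : Integrable (Y 0) μ := hY0 ▸ (integrable_const 1).indicator (hX.1 0 measurableSet_Iic)
  have hmean : μ[Y 0] = F p := by
    rw [hY0, integral_indicator_one (hX.1 0 measurableSet_Iic), hX.2.2.2.2 p]; rfl
  filter_upwards [strong_law_ae_real Y hint (fun i j hij => (hX.2.1.indepFun hij).comp hφ hφ)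
    fun i => (hX.2.2.1 i).comp hφ] with ω hω
  rw [← hmean]
  refine hω.congr fun n => ?_
  classical
  simp only [Y, ecdf, Function.comp_apply, indicator_apply, mem_Iic, Pi.le_def, Pi.one_apply,
    div_eq_inv_mul]

lemma ae_tendstoUniformlyOn_ecdf [IsProbabilityMeasure μ] (hX : IsIIDwithCDF μ X F)
    (hF : ContinuousOn F (Ici 0)) :
    ∀ᵐ ω ∂μ, TendstoUniformlyOn (fun n => ecdf n X ω) F atTop (Ici 0) := by
  have hlaw := hX.eq_measureReal_map_Iic
  have : IsProbabilityMeasure (μ.map (X 0)) :=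
    Measure.isProbabilityMeasure_map (hX.1 0).aemeasurable
  obtain ⟨D, hD, hpolya⟩ :=
    exists_countable_tendstoUniformlyOn_measureReal_Iic (μ.map (X 0)) (hlaw ▸ hF)
  filter_upwards [(ae_ball_iff hD).mpr fun p _ => hX.ae_tendsto_ecdf p] with ω hω
  have h := hpolya (fun n => empiricalMeasure (fun i => X i ω) n)
    ((eventually_ne_atTop 0).mono fun n hn => isProbabilityMeasure_empiricalMeasure _ hn)
    fun p hp => by
      simpa only [← ecdf_eq_measureReal_empiricalMeasure, ← congrFun hlaw p] using hω p hp
  simpa only [← ecdf_eq_measureReal_empiricalMeasure, ← hlaw] using h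

lemma abs_le_one [IsProbabilityMeasure μ] (hX : IsIIDwithCDF μ X F) (y : Fin d → ℝ) :
    |F y| ≤ 1 := by
  rw [hX.2.2.2.2 y, abs_of_nonneg ENNReal.toReal_nonneg]
  exact measureReal_le_one

end IsIIDwithCDF

theorem szasz_estimator_uniform_consistency_general
    {d : ℕ} {Ω : Type*} [MeasurableSpace Ω]
    (μ : Measure Ω) [IsProbabilityMeasure μ]
    (X : ℕ → Ω → Fin d → ℝ) (F : (Fin d → ℝ) → ℝ)
    (hX : IsIIDwithCDF μ X F)
    (hFcont : ContinuousOn F {x : Fin d → ℝ | ∀ j, 0 ≤ x j})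
    (mseq : ℕ → Fin d → ℕ)
    (hmin : Tendsto (fun n : ℕ => mmin (mseq n)) atTop atTop) :
    ∀ L > (0 : ℝ), ∀ᵐ ω ∂μ,
      Tendsto (fun n : ℕ =>
          sSup ((fun x => |szaszEst (mseq n) n X ω x - F x|) ''
            Set.Icc (0 : Fin d → ℝ) (fun _ => L)))
        atTop (nhds 0) := by
  intro L hL
  filter_upwards [hX.ae_tendstoUniformlyOn_ecdf hFcont] with ω hω
  exact tendsto_sSup_image_abs_sub (nonempty_Icc.mpr fun _ => hL.le)
    (tendstoUniformlyOn_szasz hFcont (fun y _ => hX.abs_le_one y) hω hmin L)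

/-- Theorem 2.7: almost sure uniform consistency on compacts. -/
theorem szasz_estimator_uniform_consistency
    {d : ℕ} (hd : 0 < d) {Ω : Type*} [MeasurableSpace Ω]
    (μ : Measure Ω) [IsProbabilityMeasure μ]
    (X : ℕ → Ω → Fin d → ℝ) (F : (Fin d → ℝ) → ℝ)
    (hX : IsIIDwithCDF μ X F)
    (hFcont : ContinuousOn F {x : Fin d → ℝ | ∀ j, 0 ≤ x j})
    (mseq : ℕ → Fin d → ℕ) (hmpos : ∀ n j, 0 < mseq n j)
    (hmin : Tendsto (fun n : ℕ => mmin (mseq n)) atTop atTop) :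
    ∀ L > (0 : ℝ), ∀ᵐ ω ∂μ,
      Tendsto (fun n : ℕ =>
          sSup ((fun x => |szaszEst (mseq n) n X ω x - F x|) ''
            Set.Icc (0 : Fin d → ℝ) (fun _ => L)))
        atTop (nhds 0) :=
  szasz_estimator_uniform_consistency_general μ X F hX hFcont mseq hmin
end

section
/- Let X be a random vector in [0,∞)^d with distribution function F(t) = P(X ≤ t) (componentwise), fix m = (m_1,…,m_d) with each m_j a positive integer and x ∈ [0,∞)^d, and define Z := Σ_{k∈ℕ_0^d} (1{X ≤ k/m} − F(k/m))·P_{k,m}(x), where k/m = (k_1/m_1,…,k_d/m_d). Let K = (K_1,…,K_d) and L = (L_1,…,L_d) be such that K_1,…,K_d,L_1,…,L_d are mutually independent, independent of X, with K_j and L_j Poisson distributed with mean m_j x_j. Then E[Z²] = E[F((K∧L)/m)] − (E[F(K/m)])², where (K∧L)_j = min(K_j, L_j) and division is componentwise. -/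
open MeasureTheory ProbabilityTheory Filter Real

/-! Put `Y_k := 1{X ≤ k/m} - F(k/m)`, so that `Z = ∑ₖ Y_k P_{k,m}(x)` with `|Y_k| ≤ 1` and
`∑ₖ |P_{k,m}(x)| < ∞`. Hence `Z² = ∑_{k,l} Y_k Y_l P_{k,m}(x) P_{l,m}(x)` can be integrated term by
term, and `E[Y_k Y_l] = Cov(1{X ≤ k/m}, 1{X ≤ l/m}) = F((k∧l)/m) - F(k/m) F(l/m)` because
`{X ≤ k/m} ∩ {X ≤ l/m} = {X ≤ (k∧l)/m}`. Summing against the product weights, which are the law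
of the independent pair `(K, L)`, gives the identity. -/

theorem summable_pi_prod_of_nonneg {ι : Type*} [Fintype ι] {κ : ι → Type*} {f : ∀ i, κ i → ℝ}
    (hf0 : ∀ i n, 0 ≤ f i n) (hf : ∀ i, Summable (f i)) :
    Summable fun k : (∀ i, κ i) => ∏ i, f i (k i) := by
  classical
  refine summable_of_sum_le (fun k => Finset.prod_nonneg fun i _ => hf0 i (k i))
    (c := ∏ i, ∑' n, f i n) fun s => ?_
  calc ∑ k ∈ s, ∏ i, f i (k i)
      ≤ ∑ k ∈ Fintype.piFinset fun i => s.image (· i), ∏ i, f i (k i) :=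
        Finset.sum_le_sum_of_subset_of_nonneg
          (fun k hk => Fintype.mem_piFinset.2 fun i => Finset.mem_image_of_mem _ hk)
          fun k _ _ => Finset.prod_nonneg fun i _ => hf0 i (k i)
    _ = ∏ i, ∑ n ∈ s.image (· i), f i n := (Finset.prod_univ_sum _ _).symm
    _ ≤ ∏ i, ∑' n, f i n :=
        Finset.prod_le_prod (fun i _ => Finset.sum_nonneg fun n _ => hf0 i n)
          fun i _ => (hf i).sum_le_tsum _ fun n _ => hf0 i n

theorem summable_poissonWeight {d : ℕ} (m : Fin d → ℕ) (x : Fin d → ℝ) :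
    Summable fun k => poissonWeight m k x := by
  refine Summable.of_abs ?_
  simp only [poissonWeight, Finset.abs_prod]
  refine summable_pi_prod_of_nonneg (κ := fun _ => ℕ)
    (f := fun j n => |Real.exp (-(m j * x j)) * (m j * x j) ^ n / n.factorial|)
    (fun _ _ => abs_nonneg _) fun j => ?_
  have h := ((Real.summable_pow_div_factorial (m j * x j)).mul_left
    (Real.exp (-(m j * x j)))).abs
  simpa only [mul_div_assoc] using h

section CenteredIndicators

variable {Ω : Type*} [MeasurableSpace Ω] {μ : Measure Ω}

theorem integral_tsum_mul_of_norm_le [IsFiniteMeasure μ] {ι : Type*} [Countable ι]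
    {g : ι → Ω → ℝ} (hg : ∀ i, AEStronglyMeasurable (g i) μ) {C : ℝ}
    (hgC : ∀ i ω, ‖g i ω‖ ≤ C) {w : ι → ℝ} (hw : Summable w) :
    ∫ ω, ∑' i, g i ω * w i ∂μ = ∑' i, (∫ ω, g i ω ∂μ) * w i := by
  have hint : ∀ i, Integrable (g i) μ :=
    fun i => Integrable.of_bound (hg i) C (Eventually.of_forall (hgC i))
  have hbound : ∀ i, ∫ ω, ‖g i ω * w i‖ ∂μ ≤ C * μ.real Set.univ * ‖w i‖ := by
    intro i
    simp only [norm_mul, integral_mul_const]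
    gcongr
    exact (Real.le_norm_self _).trans (norm_integral_le_of_norm_le_const
      (Eventually.of_forall fun ω => (norm_norm (g i ω)).trans_le (hgC i ω)))
  simp only [← integral_mul_const]
  exact (integral_tsum_of_summable_integral_norm (fun i => (hint i).mul_const _)
    (hw.norm.mul_left _ |>.of_nonneg_of_le (fun i => integral_nonneg fun _ => norm_nonneg _)
      hbound)).symm

theorem norm_indicator_one_sub_measureReal_le_one [IsProbabilityMeasure μ] (A : Set Ω) (ω : Ω) :
    ‖A.indicator (1 : Ω → ℝ) ω - μ.real A‖ ≤ 1 := by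
  have h0 : 0 ≤ A.indicator (1 : Ω → ℝ) ω := Set.indicator_nonneg (fun _ _ => zero_le_one) ω
  have h1 : A.indicator (1 : Ω → ℝ) ω ≤ 1 := Set.indicator_le_self' (fun _ _ => zero_le_one) ω
  simpa using
    abs_sub_le_of_le_of_le h0 h1 measureReal_nonneg (measureReal_le_one (μ := μ) (s := A))

theorem integral_centered_indicator_mul [IsProbabilityMeasure μ] {A B : Set Ω}
    (hA : MeasurableSet A) (hB : MeasurableSet B) :
    ∫ ω, (A.indicator 1 ω - μ.real A) * (B.indicator 1 ω - μ.real B) ∂μ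
      = μ.real (A ∩ B) - μ.real A * μ.real B := by
  have hLp : ∀ {s : Set Ω}, MeasurableSet s → MemLp (s.indicator (1 : Ω → ℝ)) 2 μ :=
    fun hs => memLp_indicator_const 2 hs (1 : ℝ) (Or.inr (measure_ne_top μ _))
  have hmean : ∀ {s : Set Ω}, MeasurableSet s → μ[s.indicator (1 : Ω → ℝ)] = μ.real s :=
    fun hs => integral_indicator_one hs
  have h := covariance_eq_sub (hLp hA) (hLp hB)
  rw [covariance, hmean hA, hmean hB, ← Set.inter_indicator_one, hmean (hA.inter hB)] at h
  exact h

theorem integral_sq_tsum_centered_indicator [IsProbabilityMeasure μ] {K : Type*} [Countable K]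
    {S : K → Set Ω} (hS : ∀ k, MeasurableSet (S k)) {p : K → ℝ} (hp : Summable p) :
    ∫ ω, (∑' k, ((S k).indicator 1 ω - μ.real (S k)) * p k) ^ 2 ∂μ
      = (∑' q : K × K, μ.real (S q.1 ∩ S q.2) * p q.1 * p q.2)
        - (∑' k, μ.real (S k) * p k) ^ 2 := by
  set c : K → Ω → ℝ := fun k ω => (S k).indicator 1 ω - μ.real (S k) with hc_def
  have hc : ∀ k ω, ‖c k ω‖ ≤ 1 := fun k => norm_indicator_one_sub_measureReal_le_one (S k)
  have hpn : Summable fun k => ‖p k‖ := hp.norm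
  have hcp : ∀ ω, Summable fun k => ‖c k ω * p k‖ := fun ω =>
    hpn.of_nonneg_of_le (fun _ => norm_nonneg _) fun k => by
      simpa [norm_mul] using mul_le_mul_of_nonneg_right (hc k ω) (norm_nonneg (p k))
  have hup : Summable fun k => ‖μ.real (S k) * p k‖ :=
    hpn.of_nonneg_of_le (fun _ => norm_nonneg _) fun k => by
      rw [norm_mul, Real.norm_of_nonneg measureReal_nonneg]
      exact mul_le_of_le_one_left (norm_nonneg _) measureReal_le_one
  have hpp : Summable fun q : K × K => ‖p q.1 * p q.2‖ := hpn.mul_norm hpn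
  have hinter : Summable fun q : K × K => μ.real (S q.1 ∩ S q.2) * p q.1 * p q.2 :=
    hpp.of_norm_bounded fun q => by
      rw [mul_assoc, norm_mul, Real.norm_of_nonneg measureReal_nonneg]
      exact mul_le_of_le_one_left (norm_nonneg _) measureReal_le_one
  have hsq : ∀ ω, (∑' k, c k ω * p k) ^ 2
      = ∑' q : K × K, (c q.1 ω * c q.2 ω) * (p q.1 * p q.2) := fun ω => by
      rw [sq, tsum_mul_tsum_of_summable_norm (hcp ω) (hcp ω)]
      exact tsum_congr fun q => by ring
  calc ∫ ω, (∑' k, c k ω * p k) ^ 2 ∂μ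
      = ∫ ω, ∑' q : K × K, (c q.1 ω * c q.2 ω) * (p q.1 * p q.2) ∂μ := by simp only [hsq]
    _ = ∑' q : K × K, (∫ ω, c q.1 ω * c q.2 ω ∂μ) * (p q.1 * p q.2) := by
      refine integral_tsum_mul_of_norm_le (C := 1) (fun q => ?_) (fun q ω => ?_) hpp.of_norm
      · exact (((measurable_one.indicator (hS q.1)).sub measurable_const).mul
          ((measurable_one.indicator (hS q.2)).sub measurable_const)).aestronglyMeasurable
      · rw [norm_mul]
        exact mul_le_one₀ (hc _ ω) (norm_nonneg _) (hc _ ω)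
    _ = ∑' q : K × K, (μ.real (S q.1 ∩ S q.2) * p q.1 * p q.2
          - μ.real (S q.1) * p q.1 * (μ.real (S q.2) * p q.2)) := by
      refine tsum_congr fun q => ?_
      rw [hc_def, integral_centered_indicator_mul (hS q.1) (hS q.2)]
      ring
    _ = _ := by
      rw [hinter.tsum_sub (hup.mul_norm hup).of_norm, sq, tsum_mul_tsum_of_summable_norm hup hup]

end CenteredIndicators

theorem szasz_centered_second_moment_general
    {d : ℕ} {Ω : Type*} [MeasurableSpace Ω]
    (μ : Measure Ω) [IsProbabilityMeasure μ]
    (X : Ω → Fin d → ℝ) (hXmeas : Measurable X)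
    (F : (Fin d → ℝ) → ℝ)
    (hF : ∀ t : Fin d → ℝ, F t = (μ {ω | ∀ j, X ω j ≤ t j}).toReal)
    (m : Fin d → ℕ)
    (x : Fin d → ℝ) :
    (∫ ω, (∑' k : Fin d → ℕ,
        ((if ∀ j, X ω j ≤ (k j : ℝ) / (m j : ℝ) then (1:ℝ) else 0)
          - F (fun j => (k j : ℝ) / (m j : ℝ))) * poissonWeight m k x) ^ 2 ∂μ)
      = (∑' p : (Fin d → ℕ) × (Fin d → ℕ),
          F (fun j => (min (p.1 j) (p.2 j) : ℝ) / (m j : ℝ))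
            * poissonWeight m p.1 x * poissonWeight m p.2 x)
        - (∑' k : Fin d → ℕ,
            F (fun j => (k j : ℝ) / (m j : ℝ)) * poissonWeight m k x) ^ 2 := by
  have hF' : ∀ t, F t = μ.real (X ⁻¹' Set.Iic t) := hF
  have hmin : ∀ k l : Fin d → ℕ, (fun j => (min (k j) (l j) : ℝ) / (m j : ℝ))
      = (fun j => (k j : ℝ) / (m j : ℝ)) ⊓ fun j => (l j : ℝ) / (m j : ℝ) :=
    fun k l => funext fun j => (min_div_div_right (Nat.cast_nonneg _) _ _).symm
  have hind : ∀ (ω : Ω) (t : Fin d → ℝ),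
      (if ∀ j, X ω j ≤ t j then (1 : ℝ) else 0) = (X ⁻¹' Set.Iic t).indicator 1 ω := by
    intro ω t
    by_cases h : ∀ j, X ω j ≤ t j
    · rw [if_pos h, Set.indicator_of_mem (show X ω ≤ t from h), Pi.one_apply]
    · rw [if_neg h, Set.indicator_of_notMem (show ¬X ω ≤ t from h)]
  simp only [hF', hmin, hind, ← Set.Iic_inter_Iic, Set.preimage_inter]
  exact integral_sq_tsum_centered_indicator (fun k => hXmeas measurableSet_Iic)
    (summable_poissonWeight m x)

/-- Second-moment identity (Equation (A.1) in the proof of Theorem 2.2):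
`E[Z²] = E[F((K∧L)/m)] − (E[F(K/m)])²`, where the expectations over the independent
Poisson vectors `K, L` (with `K_j, L_j ~ Poi(m_j x_j)`) are written out as sums against
the product-Poisson probability weights `P_{k,m}(x)`. -/
theorem szasz_centered_second_moment
    {d : ℕ} (hd : 0 < d) {Ω : Type*} [MeasurableSpace Ω]
    (μ : Measure Ω) [IsProbabilityMeasure μ]
    (X : Ω → Fin d → ℝ) (hXmeas : Measurable X)
    (F : (Fin d → ℝ) → ℝ)
    (hF : ∀ t : Fin d → ℝ, F t = (μ {ω | ∀ j, X ω j ≤ t j}).toReal)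
    (m : Fin d → ℕ) (hm : ∀ j, 0 < m j)
    (x : Fin d → ℝ) (hx : ∀ j, 0 ≤ x j) :
    (∫ ω, (∑' k : Fin d → ℕ,
        ((if ∀ j, X ω j ≤ (k j : ℝ) / (m j : ℝ) then (1:ℝ) else 0)
          - F (fun j => (k j : ℝ) / (m j : ℝ))) * poissonWeight m k x) ^ 2 ∂μ)
      = (∑' p : (Fin d → ℕ) × (Fin d → ℕ),
          F (fun j => (min (p.1 j) (p.2 j) : ℝ) / (m j : ℝ))
            * poissonWeight m p.1 x * poissonWeight m p.2 x)
        - (∑' k : Fin d → ℕ,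
            F (fun j => (k j : ℝ) / (m j : ℝ)) * poissonWeight m k x) ^ 2 :=
  szasz_centered_second_moment_general μ X hXmeas F hF m x
end
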